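/- arXiv:1801.04595 — 3 statements merged into one kernel-verified Lean document; each statement's English description precedes it below -/
import Mathlib

section
/- Let G be a finite group of order ℓ acting by automorphisms on an abelian group A. If a ∈ A and g ∈ G satisfy [a, g, …, g] = 1 with n occurrences of g (iterated action-commutators), then [a,g]^(ℓ^(n-1)) = 1. -/
/-!
Since `A` is abelian, `c := a ↦ [a, g]` is an endomorphism of `A`, and `aengel a g n = cⁿ a`.
If `c (c b) = 1`, then `g` fixes `c b`, so `gʲ • b = b * (c b)ʲ`; taking `j = orderOf g`
gives `(c b) ^ ℓ = 1`. Inductively, `cⁿ a = 1` gives `c (c a) ^ ℓ ^ (n - 2) = 1`, that is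
`c (c (a ^ ℓ ^ (n - 2))) = 1`, whence `c a ^ ℓ ^ (n - 1) = 1`.
-/

/-- Iterated generalized commutator for a group action:
`aengel a g 0 = a`, `aengel a g (n+1) = [aengel a g n, g]` where `[a,g] = a⁻¹ · (a • g)`. -/
def aengel {G A : Type*} [Group G] [CommGroup A] [MulDistribMulAction G A]
    (a : A) (g : G) : ℕ → A
  | 0 => a
  | n + 1 => (aengel a g n)⁻¹ * g • aengel a g n

namespace MulDistribMulAction

variable {G A : Type*} [Group G] [CommGroup A] [MulDistribMulAction G A]

def commHom (g : G) : A →* A where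
  toFun a := a⁻¹ * g • a
  map_one' := by simp
  map_mul' a b := by
    simp only [mul_inv, smul_mul']
    exact mul_mul_mul_comm _ _ _ _

theorem commHom_apply (g : G) (a : A) : commHom g a = a⁻¹ * g • a := rfl

theorem aengel_eq_iterate_commHom (a : A) (g : G) (n : ℕ) :
    aengel a g n = (commHom g)^[n] a := by
  induction n with
  | zero => rfl
  | succ n ih => rw [Function.iterate_succ_apply', ← ih]; rfl

theorem commHom_eq_one_iff {g : G} {a : A} : commHom g a = 1 ↔ g • a = a := by
  rw [commHom_apply, inv_mul_eq_one, eq_comm]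

theorem smul_eq_mul_commHom (g : G) (a : A) : g • a = a * commHom g a :=
  (mul_inv_cancel_left a _).symm

theorem pow_smul_eq_mul_commHom_pow {g : G} {a : A} (h : commHom g (commHom g a) = 1)
    (j : ℕ) : g ^ j • a = a * commHom g a ^ j := by
  induction j with
  | zero => simp
  | succ j ih =>
    rw [pow_succ', mul_smul, ih, smul_mul', smul_pow', commHom_eq_one_iff.mp h,
      smul_eq_mul_commHom, pow_succ', mul_assoc]

theorem commHom_pow_orderOf_eq_one {g : G} {a : A} (h : commHom g (commHom g a) = 1) :
    commHom g a ^ orderOf g = 1 := by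
  have := pow_smul_eq_mul_commHom_pow h (orderOf g)
  rwa [pow_orderOf_eq_one, one_smul, left_eq_mul] at this

theorem commHom_pow_natCard_eq_one [Finite G] {g : G} {a : A}
    (h : commHom g (commHom g a) = 1) : commHom g a ^ Nat.card G = 1 := by
  obtain ⟨t, ht⟩ := orderOf_dvd_natCard g
  rw [ht, pow_mul, commHom_pow_orderOf_eq_one h, one_pow]

theorem commHom_pow_natCard_pow_eq_one [Finite G] {g : G} {a : A} {n : ℕ}
    (h : (commHom g)^[n + 1] a = 1) : commHom g a ^ Nat.card G ^ n = 1 := by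
  induction n generalizing a with
  | zero => simpa using h
  | succ n ih =>
    have h_ca : commHom g (commHom g a) ^ Nat.card G ^ n = 1 := ih h
    rw [← map_pow, ← map_pow] at h_ca
    rw [pow_succ, pow_mul, ← map_pow]
    exact commHom_pow_natCard_eq_one h_ca

end MulDistribMulAction

theorem stmt_1 {G A : Type*} [Group G] [Finite G] [CommGroup A]
    [MulDistribMulAction G A] (ℓ : ℕ) (hℓ : Nat.card G = ℓ)
    (a : A) (g : G) (n : ℕ) (hn : 1 ≤ n) (h : aengel a g n = 1) :
    (aengel a g 1) ^ (ℓ ^ (n - 1)) = 1 := by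
  obtain ⟨m, rfl⟩ := Nat.exists_eq_add_of_le' hn
  rw [MulDistribMulAction.aengel_eq_iterate_commHom] at h ⊢
  subst hℓ
  exact MulDistribMulAction.commHom_pow_natCard_pow_eq_one h
end

section
/- Let G be a finite group acting by automorphisms on a finitely generated abelian group A. If the action is Engel (for every a ∈ A and g ∈ G there exists n ≥ 1 with the n-fold iterated commutator [a, g, …, g] = 1), then the subgroup of A generated by all commutators [a,g] = a⁻¹ · (a • g) is finite. -/
/-!
Fix `g` of finite order `m` and write `δ a = a⁻¹ * g • a`. Telescoping gives
`a⁻¹ * g ^ j • a = ∏_{k<j} g ^ k • δ a`. For `b = δ a` and `j = m` this says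
`∏_{j<m} g ^ j • b = 1`; for general `j` it shows that `g ^ j • b ≡ b` modulo torsion as soon
as `δ b` is torsion, and then `b ^ m` is torsion, hence so is `b`. Descending along
`δ^n a = 1` shows that every commutator `δ a` is torsion, and the torsion subgroup of a finitely
generated abelian group is finite.
-/

open Finset

section Commutator

variable {G A : Type*} [Group G] [CommGroup A] [MulDistribMulAction G A]

lemma aengel_succ' (a : A) (g : G) (n : ℕ) :
    aengel a g (n + 1) = aengel (a⁻¹ * g • a) g n := by
  induction n with
  | zero => rfl
  | succ n ih => rw [aengel, ih]; rfl

lemma inv_mul_pow_smul_eq_prod (a : A) (g : G) (j : ℕ) :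
    a⁻¹ * g ^ j • a = ∏ k ∈ range j, g ^ k • (a⁻¹ * g • a) := by
  induction j with
  | zero => simp
  | succ j ih =>
    rw [prod_range_succ, ← ih, smul_mul', smul_inv', smul_smul, ← pow_succ]
    group

lemma prod_range_pow_smul_commutator_eq_one {g : G} {m : ℕ} (hg : g ^ m = 1) (a : A) :
    ∏ j ∈ range m, g ^ j • (a⁻¹ * g • a) = 1 := by
  rw [← inv_mul_pow_smul_eq_prod, hg, one_smul, inv_mul_cancel]

lemma commutator_mem_torsion_of_commutator_commutator_mem_torsion {g : G} (hg : IsOfFinOrder g)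
    {a : A} (h : (a⁻¹ * g • a)⁻¹ * g • (a⁻¹ * g • a) ∈ CommGroup.torsion A) :
    a⁻¹ * g • a ∈ CommGroup.torsion A := by
  set b := a⁻¹ * g • a
  set m := orderOf g
  have h_translates : ∀ j, b⁻¹ * g ^ j • b ∈ CommGroup.torsion A := fun j => by
    rw [inv_mul_pow_smul_eq_prod]
    exact Subgroup.prod_mem _ fun k _ =>
      CommGroup.le_comap_torsion (MulDistribMulAction.toMonoidHom A (g ^ k)) h
  have h_pow : b ^ m = (∏ j ∈ range m, b⁻¹ * g ^ j • b)⁻¹ := by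
    rw [prod_mul_distrib, prod_range_pow_smul_commutator_eq_one (pow_orderOf_eq_one g),
      prod_const, card_range, mul_one, inv_pow, inv_inv]
  have hb : b ^ m ∈ CommGroup.torsion A := by
    rw [h_pow]
    exact inv_mem (Subgroup.prod_mem _ fun j _ => h_translates j)
  exact IsOfFinOrder.of_pow hb hg.orderOf_pos.ne'

lemma commutator_mem_torsion_of_aengel_eq_one {g : G} (hg : IsOfFinOrder g) {n : ℕ} {a : A}
    (ha : aengel a g n = 1) : a⁻¹ * g • a ∈ CommGroup.torsion A := by
  induction n generalizing a with
  | zero =>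
    rw [aengel] at ha
    simp [ha]
  | succ n ih =>
    rw [aengel_succ'] at ha
    exact commutator_mem_torsion_of_commutator_commutator_mem_torsion hg (ih ha)

end Commutator

lemma CommGroup.subgroup_fg {A : Type*} [CommGroup A] [Group.FG A] (H : Subgroup A) :
    Group.FG H := by
  have : Module.Finite ℤ (Additive A) := Module.Finite.iff_addGroup_fg.mpr inferInstance
  have h_submodule : (AddSubgroup.toIntSubmodule H.toAddSubgroup).FG := IsNoetherian.noetherian _
  rw [Submodule.fg_iff_addSubgroup_fg, AddSubgroup.toIntSubmodule_toAddSubgroup] at h_submodule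
  exact (Group.fg_iff_subgroup_fg H).mpr ((Subgroup.fg_iff_add_fg H).mpr h_submodule)

lemma CommGroup.finite_torsion (A : Type*) [CommGroup A] [Group.FG A] :
    Finite (CommGroup.torsion A) :=
  have := CommGroup.subgroup_fg (CommGroup.torsion A)
  CommGroup.finite_of_fg_isMulTorsion _ fun x => Submonoid.isOfFinOrder_coe.mp x.2

theorem stmt_2 {G A : Type*} [Group G] [Finite G] [CommGroup A] [Group.FG A]
    [MulDistribMulAction G A]
    (hEngel : ∀ (a : A) (g : G), ∃ n, 1 ≤ n ∧ aengel a g n = 1) :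
    (Subgroup.closure {x : A | ∃ (a : A) (g : G), x = a⁻¹ * g • a} : Set A).Finite := by
  have h_le : Subgroup.closure {x : A | ∃ (a : A) (g : G), x = a⁻¹ * g • a} ≤
      CommGroup.torsion A := by
    rw [Subgroup.closure_le]
    rintro _ ⟨a, g, rfl⟩
    obtain ⟨n, -, hn⟩ := hEngel a g
    exact commutator_mem_torsion_of_aengel_eq_one (isOfFinOrder_of_finite g) hn
  have := CommGroup.finite_torsion A
  exact (Set.toFinite (CommGroup.torsion A : Set A)).subset h_le
end

section
/- Let G be a group, S a normal subgroup of G with G/S cyclic, and suppose the subgroup generated by all commutators [g,s] with g ∈ G, s ∈ S equals a subgroup N. Then the commutator subgroup G' equals ⟨[G,S]⟩, i.e., G' = N. -/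
namespace Subgroup

variable {G : Type*} [Group G]

-- Mathlib's `⁅a, b⁆` is `a * b * a⁻¹ * b⁻¹`, so `g⁻¹ * s⁻¹ * g * s = ⁅g⁻¹, s⁻¹⁆`.
theorem closure_conj_commutators_eq_commutator_top (S : Subgroup G) :
    closure {x : G | ∃ g : G, ∃ s ∈ S, x = g⁻¹ * s⁻¹ * g * s} = ⁅(⊤ : Subgroup G), S⁆ := by
  rw [commutator_def]
  congr 1
  ext x
  constructor
  · rintro ⟨g, s, hs, rfl⟩
    exact ⟨g⁻¹, mem_top _, s⁻¹, inv_mem hs, by simp [commutatorElement_def]⟩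
  · rintro ⟨g, -, s, hs, rfl⟩
    exact ⟨g⁻¹, s⁻¹, inv_mem hs, by simp [commutatorElement_def]⟩

theorem map_mk'_le_center_of_commutator_top_le {N S : Subgroup G} [N.Normal]
    (h : ⁅(⊤ : Subgroup G), S⁆ ≤ N) : S.map (QuotientGroup.mk' N) ≤ center (G ⧸ N) := by
  rw [← commutator_top_left_eq_bot_iff_le_center,
    ← map_top_of_surjective _ (QuotientGroup.mk'_surjective N), ← map_commutator, eq_bot_iff,
    map_le_iff_le_comap, MonoidHom.comap_bot, QuotientGroup.ker_mk']
  exact h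

/-- `(G ⧸ ⁅G, S⁆) ⧸ (S ⧸ ⁅G, S⁆) ≃ G ⧸ S` is cyclic with central kernel, so `G ⧸ ⁅G, S⁆` is
abelian. -/
theorem commutator_le_commutator_top_of_isCyclic (S : Subgroup G) [S.Normal]
    [IsCyclic (G ⧸ S)] : _root_.commutator G ≤ ⁅(⊤ : Subgroup G), S⁆ := by
  rw [← Normal.quotient_commutative_iff_commutator_le]
  refine (QuotientGroup.map ⁅(⊤ : Subgroup G), S⁆ S (MonoidHom.id G)
    ((commutator_le_right _ _).trans (comap_id S).ge))
    |>.isMulCommutative_of_isCyclic_of_ker_le_center ?_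
  rw [QuotientGroup.ker_map, comap_id]
  exact map_mk'_le_center_of_commutator_top_le le_rfl

theorem commutator_eq_commutator_top_of_isCyclic (S : Subgroup G) [S.Normal]
    [IsCyclic (G ⧸ S)] : _root_.commutator G = ⁅(⊤ : Subgroup G), S⁆ :=
  (commutator_le_commutator_top_of_isCyclic S).antisymm
    ((_root_.commutator_def G).symm ▸ commutator_mono le_rfl le_top)

end Subgroup

theorem stmt_6 {G : Type*} [Group G] (S : Subgroup G) (hS : S.Normal)
    (hcyc : IsCyclic (G ⧸ S)) :
    commutator G = Subgroup.closure {x : G | ∃ g : G, ∃ s ∈ S, x = g⁻¹ * s⁻¹ * g * s} := by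
  rw [Subgroup.closure_conj_commutators_eq_commutator_top,
    Subgroup.commutator_eq_commutator_top_of_isCyclic S]
end
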